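/- arXiv:2603.01264 — 3 statements merged into one kernel-verified Lean document; each statement's English description precedes it below -/
import Mathlib

section
/- Let N ≥ 1 be an integer, let 0 < a < b be real numbers, and let λ_1, …, λ_N be real numbers with a ≤ λ_i ≤ b for every i and λ_1 + ⋯ + λ_N = N. Set k = N(b − 1)/(b − a) (a real number, with real-exponent powers below). Then ∏_{i=1}^N λ_i ≥ a^k · b^{N−k}. -/
/-- Kalantari-type determinant/product lower bound:
if `N ≥ 1`, `0 < a < b`, `a ≤ λ_i ≤ b` for all `i` and `∑ λ_i = N`, then with
`k = N(b-1)/(b-a)` one has `∏ λ_i ≥ a^k * b^(N-k)` (real-exponent powers). -/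
theorem prod_ge_rpow_of_sum_eq {N : ℕ} (hN : 1 ≤ N) (a b : ℝ)
    (ha : 0 < a) (hab : a < b) (lam : Fin N → ℝ)
    (hlb : ∀ i, a ≤ lam i) (hub : ∀ i, lam i ≤ b)
    (hsum : ∑ i, lam i = (N : ℝ)) :
    a ^ ((N : ℝ) * (b - 1) / (b - a)) * b ^ ((N : ℝ) - (N : ℝ) * (b - 1) / (b - a)) ≤
      ∏ i, lam i := by
  have hb : 0 < b := ha.trans hab
  have hba : 0 < b - a := sub_pos.2 hab
  have hpos : ∀ i, 0 < lam i := fun i => ha.trans_le (hlb i)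
  set k : ℝ := (N : ℝ) * (b - 1) / (b - a) with hk
  -- chord inequality for log on [a,b]
  have key : ∀ i, (b - lam i) / (b - a) * Real.log a
      + (1 - (b - lam i) / (b - a)) * Real.log b ≤ Real.log (lam i) := by
    intro i
    have ht0 : 0 ≤ (b - lam i) / (b - a) := div_nonneg (sub_nonneg.2 (hub i)) hba.le
    have ht1 : 0 ≤ 1 - (b - lam i) / (b - a) := by
      have : (b - lam i) / (b - a) ≤ 1 := by
        rw [div_le_one hba]; linarith [hlb i]
      linarith
    have h := strictConcaveOn_log_Ioi.concaveOn.2 (Set.mem_Ioi.2 ha) (Set.mem_Ioi.2 hb)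
      ht0 ht1 (by ring)
    simp only [smul_eq_mul] at h
    have heq : (b - lam i) / (b - a) * a + (1 - (b - lam i) / (b - a)) * b = lam i := by
      field_simp; ring
    rwa [heq] at h
  have hsum2 : k * Real.log a + ((N : ℝ) - k) * Real.log b ≤ ∑ i, Real.log (lam i) := by
    have h1 : ∑ i, ((b - lam i) / (b - a) * Real.log a
        + (1 - (b - lam i) / (b - a)) * Real.log b) ≤ ∑ i, Real.log (lam i) :=
      Finset.sum_le_sum fun i _ => key i
    have h2 : ∑ i, ((b - lam i) / (b - a) * Real.log a
        + (1 - (b - lam i) / (b - a)) * Real.log b)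
        = k * Real.log a + ((N : ℝ) - k) * Real.log b := by
      rw [Finset.sum_add_distrib, ← Finset.sum_mul, ← Finset.sum_mul]
      have e1 : ∑ i, (b - lam i) / (b - a) = k := by
        rw [← Finset.sum_div, Finset.sum_sub_distrib, hsum, Finset.sum_const,
          Finset.card_univ, Fintype.card_fin, hk]
        ring_nf
      have e2 : ∑ i : Fin N, (1 - (b - lam i) / (b - a)) = (N : ℝ) - k := by
        rw [Finset.sum_sub_distrib, e1, Finset.sum_const, Finset.card_univ, Fintype.card_fin]
        simp
      rw [e1, e2]
    linarith
  have hrw : a ^ k * b ^ ((N : ℝ) - k)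
      = Real.exp (k * Real.log a + ((N : ℝ) - k) * Real.log b) := by
    rw [Real.exp_add, Real.rpow_def_of_pos ha, Real.rpow_def_of_pos hb, mul_comm (Real.log a),
      mul_comm (Real.log b)]
  have hprod : Real.exp (∑ i, Real.log (lam i)) = ∏ i, lam i := by
    rw [Real.exp_sum]
    exact Finset.prod_congr rfl fun i _ => Real.exp_log (hpos i)
  calc a ^ k * b ^ ((N : ℝ) - k)
      = Real.exp (k * Real.log a + ((N : ℝ) - k) * Real.log b) := hrw
    _ ≤ Real.exp (∑ i, Real.log (lam i)) := Real.exp_le_exp.2 hsum2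
    _ = ∏ i, lam i := hprod
end

section
/- Let R_x and R_{x'} be N×N real symmetric positive definite matrices with all diagonal entries equal to 1. Let Λ_max = max(λ_max(R_x), λ_max(R_{x'})) and Λ_min = min(λ_min(R_x), λ_min(R_{x'})), and suppose Λ_min < Λ_max. Let q ∈ [0,1], R = q·R_x + (1−q)·R_{x'}, and k = N(Λ_max − 1)/(Λ_max − Λ_min). Then det R ≥ Λ_min^k · Λ_max^{N−k} (powers with real exponents). -/
open Matrix

/-- The largest eigenvalue of a real symmetric (Hermitian) matrix. -/
noncomputable def lamMax {n : ℕ} {A : Matrix (Fin n) (Fin n) ℝ} (hA : A.IsHermitian) : ℝ :=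
  ⨆ i, hA.eigenvalues i

/-- The smallest eigenvalue of a real symmetric (Hermitian) matrix. -/
noncomputable def lamMin {n : ℕ} {A : Matrix (Fin n) (Fin n) ℝ} (hA : A.IsHermitian) : ℝ :=
  ⨅ i, hA.eigenvalues i

/-!
In the Loewner order `Λ_min • 1 ≤ R_x, R_x' ≤ Λ_max • 1`, and order intervals are convex, so the
eigenvalues of `R` lie in `[Λ_min, Λ_max]`; as `R` has unit diagonal, they sum to `N`. An eigenvalue `μ` is the
convex combination of `Λ_min` and `Λ_max` with weights `(Λ_max - μ)/(Λ_max - Λ_min)` and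
`(μ - Λ_min)/(Λ_max - Λ_min)`, so weighted AM-GM gives `Λ_min ^ w * Λ_max ^ (1 - w) ≤ μ`.
Multiplying over the eigenvalues, the weights add up to `k` and `N - k`.
-/

open Set
open scoped MatrixOrder

section WeightedProduct

variable {m M : ℝ}

lemma rpow_mul_rpow_le_of_mem_Icc {x : ℝ} (hm : 0 ≤ m) (hmM : m < M) (hx : x ∈ Icc m M) :
    m ^ ((M - x) / (M - m)) * M ^ ((x - m) / (M - m)) ≤ x := by
  have hd : 0 < M - m := sub_pos.2 hmM
  calc _ ≤ (M - x) / (M - m) * m + (x - m) / (M - m) * M :=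
        Real.geom_mean_le_arith_mean2_weighted (div_nonneg (sub_nonneg.2 hx.2) hd.le)
          (div_nonneg (sub_nonneg.2 hx.1) hd.le) hm (hm.trans hmM.le) (by field_simp; ring)
    _ = x := by field_simp; ring

variable {ι : Type*} [Fintype ι] {μ : ι → ℝ}

lemma rpow_mul_rpow_le_prod (hm : 0 ≤ m) (hmM : m < M) (hμ : ∀ i, μ i ∈ Icc m M) :
    m ^ (∑ i, (M - μ i) / (M - m)) * M ^ (∑ i, (μ i - m) / (M - m)) ≤ ∏ i, μ i := by
  have hd : 0 < M - m := sub_pos.2 hmM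
  rw [Real.rpow_sum_of_nonneg hm fun i _ => div_nonneg (sub_nonneg.2 (hμ i).2) hd.le,
    Real.rpow_sum_of_nonneg (hm.trans hmM.le) fun i _ => div_nonneg (sub_nonneg.2 (hμ i).1) hd.le,
    ← Finset.prod_mul_distrib]
  exact Finset.prod_le_prod
    (fun i _ => mul_nonneg (Real.rpow_nonneg hm _) (Real.rpow_nonneg (hm.trans hmM.le) _))
    fun i _ => rpow_mul_rpow_le_of_mem_Icc hm hmM (hμ i)

lemma rpow_mul_rpow_le_prod_of_sum_eq_card (hm : 0 ≤ m) (hmM : m < M) (hμ : ∀ i, μ i ∈ Icc m M)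
    (hsum : ∑ i, μ i = Fintype.card ι) :
    m ^ (Fintype.card ι * (M - 1) / (M - m)) *
      M ^ (Fintype.card ι - Fintype.card ι * (M - 1) / (M - m)) ≤ ∏ i, μ i := by
  have hd : M - m ≠ 0 := (sub_pos.2 hmM).ne'
  convert rpow_mul_rpow_le_prod hm hmM hμ using 3
  · rw [← Finset.sum_div, Finset.sum_sub_distrib, hsum, Finset.sum_const, Finset.card_univ,
      nsmul_eq_mul]; ring
  · rw [← Finset.sum_div, Finset.sum_sub_distrib, hsum, Finset.sum_const, Finset.card_univ,
      nsmul_eq_mul]; field_simp; ring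

end WeightedProduct

namespace Matrix.IsHermitian

variable {n : Type*} [Fintype n] [DecidableEq n] {A : Matrix n n ℝ}

lemma mem_Icc_smul_one_iff (hA : A.IsHermitian) (a b : ℝ) :
    A ∈ Icc (a • (1 : Matrix n n ℝ)) (b • 1) ↔ ∀ i, hA.eigenvalues i ∈ Icc a b := by
  simp only [mem_Icc, ← Algebra.algebraMap_eq_smul_one,
    algebraMap_le_iff_le_spectrum hA.isSelfAdjoint, le_algebraMap_iff_spectrum_le hA.isSelfAdjoint,
    hA.spectrum_real_eq_range_eigenvalues, forall_mem_range, forall_and]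

lemma rpow_mul_rpow_le_det (hA : A.IsHermitian) {m M : ℝ} (hm : 0 ≤ m) (hmM : m < M)
    (hspec : A ∈ Icc (m • (1 : Matrix n n ℝ)) (M • 1)) (htr : A.trace = Fintype.card n) :
    m ^ (Fintype.card n * (M - 1) / (M - m)) *
      M ^ (Fintype.card n - Fintype.card n * (M - 1) / (M - m)) ≤ A.det := by
  rw [hA.det_eq_prod_eigenvalues]
  refine rpow_mul_rpow_le_prod_of_sum_eq_card hm hmM ((hA.mem_Icc_smul_one_iff m M).1 hspec) ?_
  simpa [hA.trace_eq_sum_eigenvalues] using htr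

end Matrix.IsHermitian

lemma Matrix.trace_eq_card_of_forall_diag_eq_one {n R : Type*} [Fintype n]
    [AddCommMonoidWithOne R] {A : Matrix n n R} (h : ∀ i, A i i = 1) :
    A.trace = Fintype.card n := by
  simp [trace, h]

lemma eigenvalues_mem_Icc_lamMin_lamMax {N : ℕ} {A : Matrix (Fin N) (Fin N) ℝ}
    (hA : A.IsHermitian) (i : Fin N) : hA.eigenvalues i ∈ Icc (lamMin hA) (lamMax hA) :=
  ⟨ciInf_le (finite_range _).bddBelow i, le_ciSup (finite_range _).bddAbove i⟩

lemma lamMin_nonneg {N : ℕ} {A : Matrix (Fin N) (Fin N) ℝ} (hA : A.PosSemidef) :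
    0 ≤ lamMin hA.isHermitian :=
  Real.iInf_nonneg hA.eigenvalues_nonneg

theorem det_convex_combination_ge_rpow_general {N : ℕ}
    (Rx Rx' : Matrix (Fin N) (Fin N) ℝ)
    (hRx : Rx.PosDef) (hRx' : Rx'.PosDef)
    (hdiag : ∀ i, Rx i i = 1) (hdiag' : ∀ i, Rx' i i = 1)
    (Lmax Lmin : ℝ)
    (hLmax : Lmax = max (lamMax hRx.isHermitian) (lamMax hRx'.isHermitian))
    (hLmin : Lmin = min (lamMin hRx.isHermitian) (lamMin hRx'.isHermitian))
    (hlt : Lmin < Lmax)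
    (q : ℝ) (hq0 : 0 ≤ q) (hq1 : q ≤ 1)
    (k : ℝ) (hk : k = (N : ℝ) * (Lmax - 1) / (Lmax - Lmin)) :
    Lmin ^ k * Lmax ^ ((N : ℝ) - k) ≤ (q • Rx + (1 - q) • Rx').det := by
  have hLmin0 : 0 ≤ Lmin :=
    hLmin ▸ le_min (lamMin_nonneg hRx.posSemidef) (lamMin_nonneg hRx'.posSemidef)
  have hx : Rx ∈ Icc (Lmin • (1 : Matrix (Fin N) (Fin N) ℝ)) (Lmax • 1) :=
    (hRx.isHermitian.mem_Icc_smul_one_iff _ _).2 fun i =>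
      Icc_subset_Icc (hLmin ▸ min_le_left _ _) (hLmax ▸ le_max_left _ _)
        (eigenvalues_mem_Icc_lamMin_lamMax _ i)
  have hx' : Rx' ∈ Icc (Lmin • (1 : Matrix (Fin N) (Fin N) ℝ)) (Lmax • 1) :=
    (hRx'.isHermitian.mem_Icc_smul_one_iff _ _).2 fun i =>
      Icc_subset_Icc (hLmin ▸ min_le_right _ _) (hLmax ▸ le_max_right _ _)
        (eigenvalues_mem_Icc_lamMin_lamMax _ i)
  have hR : (q • Rx + (1 - q) • Rx').IsHermitian :=
    ((hRx.posSemidef.smul hq0).add (hRx'.posSemidef.smul (sub_nonneg.2 hq1))).isHermitian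
  have hdiagR : ∀ i, (q • Rx + (1 - q) • Rx') i i = 1 := fun i => by simp [hdiag, hdiag']
  simpa only [Fintype.card_fin, hk] using hR.rpow_mul_rpow_le_det hLmin0 hlt
    (convex_Icc _ _ hx hx' hq0 (sub_nonneg.2 hq1) (add_sub_cancel q 1))
    (trace_eq_card_of_forall_diag_eq_one hdiagR)

/-- for `N × N` real symmetric positive definite matrices `R_x`, `R_x'`
with unit diagonal, `Λ_max = max (λ_max R_x) (λ_max R_x')`,
`Λ_min = min (λ_min R_x) (λ_min R_x')` with `Λ_min < Λ_max`, `q ∈ [0,1]`,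
`R = q•R_x + (1-q)•R_x'`, and `k = N(Λ_max - 1)/(Λ_max - Λ_min)`, one has
`det R ≥ Λ_min^k * Λ_max^(N-k)` (real-exponent powers). -/
theorem det_convex_combination_ge_rpow {N : ℕ} (hN : 0 < N)
    (Rx Rx' : Matrix (Fin N) (Fin N) ℝ)
    (hRx : Rx.PosDef) (hRx' : Rx'.PosDef)
    (hdiag : ∀ i, Rx i i = 1) (hdiag' : ∀ i, Rx' i i = 1)
    (Lmax Lmin : ℝ)
    (hLmax : Lmax = max (lamMax hRx.isHermitian) (lamMax hRx'.isHermitian))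
    (hLmin : Lmin = min (lamMin hRx.isHermitian) (lamMin hRx'.isHermitian))
    (hlt : Lmin < Lmax)
    (q : ℝ) (hq0 : 0 ≤ q) (hq1 : q ≤ 1)
    (k : ℝ) (hk : k = (N : ℝ) * (Lmax - 1) / (Lmax - Lmin)) :
    Lmin ^ k * Lmax ^ ((N : ℝ) - k) ≤ (q • Rx + (1 - q) • Rx').det :=
  det_convex_combination_ge_rpow_general Rx Rx' hRx hRx' hdiag hdiag' Lmax Lmin hLmax hLmin hlt q
    hq0 hq1 k hk
end

section
/- Let f_W be an n-layer ReLU network with weight matrices W_1, …, W_n, each nonzero, and let U_1, …, U_n be matrices of the same respective dimensions satisfying ‖U_l‖₂ ≤ (1/n)·‖W_l‖₂ for every l. Then for every input x, ‖f_{W+U}(x) − f_W(x)‖₂ ≤ e · ‖x‖₂ · (∏_{l=1}^{n} ‖W_l‖₂) · Σ_{l=1}^{n} ‖U_l‖₂ / ‖W_l‖₂, where f_{W+U} is the ReLU network with weight matrices W_1 + U_1, …, W_n + U_n. -/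
/-!
Perturbing one layer at a time: since `(A + B) z - A y = (A + B) (z - y) + B y` and ReLU is
`1`-Lipschitz, induction on the depth gives
`‖f_{W+U}(x) - f_W(x)‖ ≤ (∏ (‖W_l‖ + ‖U_l‖) - ∏ ‖W_l‖) ‖x‖`.
With `r_l = ‖U_l‖ / ‖W_l‖ ≤ 1 / n` this is `∏ ‖W_l‖ (∏ (1 + r_l) - 1) ‖x‖`, and
`∏ (1 + r_l) - 1 ≤ exp (∑ r_l) - 1 ≤ exp (∑ r_l) ∑ r_l ≤ e ∑ r_l` because `∑ r_l ≤ 1`.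
-/

open Matrix

/-- The spectral norm of a real matrix: its operator norm as a map between
Euclidean (`ℓ²`) spaces. -/
noncomputable def specNorm {m k : ℕ} (A : Matrix (Fin m) (Fin k) ℝ) : ℝ :=
  ‖LinearMap.toContinuousLinearMap (Matrix.toEuclideanLin A)‖

/-- The Euclidean (`ℓ²`) norm of a vector in `ℝ^k`. -/
noncomputable def vnorm {k : ℕ} (v : Fin k → ℝ) : ℝ :=
  Real.sqrt (∑ i, (v i) ^ 2)

/-- Coordinatewise ReLU activation. -/
def relu {k : ℕ} (v : Fin k → ℝ) : Fin k → ℝ := fun i => max (v i) 0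

/-- `actStack n d W x = act(W_n · act(W_{n-1} · ⋯ · act(W_1 · x)))`:
the activated output after `n` layers (activation applied after every layer). -/
def actStack : (n : ℕ) → (d : Fin (n + 1) → ℕ) →
    ((l : Fin n) → Matrix (Fin (d l.succ)) (Fin (d l.castSucc)) ℝ) →
    (Fin (d 0) → ℝ) → (Fin (d (Fin.last n)) → ℝ)
  | 0, _, _, x => x
  | n + 1, d, W, x =>
      relu ((W (Fin.last n)) *ᵥ
        actStack n (fun l => d l.castSucc) (fun l => W l.castSucc) x)

/-- The `n`-layer ReLU network with weight matrices `W_1, …, W_n`: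
`f_W(x) = W_n · act(W_{n-1} · ⋯ · act(W_1 · x) ⋯)` (no activation on the last
layer). For `n = 0` it is the identity. -/
def reluNet : (n : ℕ) → (d : Fin (n + 1) → ℕ) →
    ((l : Fin n) → Matrix (Fin (d l.succ)) (Fin (d l.castSucc)) ℝ) →
    (Fin (d 0) → ℝ) → (Fin (d (Fin.last n)) → ℝ)
  | 0, _, _, x => x
  | n + 1, d, W, x =>
      (W (Fin.last n)) *ᵥ
        actStack n (fun l => d l.castSucc) (fun l => W l.castSucc) x

lemma vnorm_eq_norm_toLp {k : ℕ} (v : Fin k → ℝ) : vnorm v = ‖WithLp.toLp 2 v‖ := by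
  simp [vnorm, EuclideanSpace.norm_eq]

lemma vnorm_nonneg {k : ℕ} (v : Fin k → ℝ) : 0 ≤ vnorm v := Real.sqrt_nonneg _

lemma vnorm_add_le {k : ℕ} (v w : Fin k → ℝ) : vnorm (v + w) ≤ vnorm v + vnorm w := by
  simpa only [vnorm_eq_norm_toLp, WithLp.toLp_add] using norm_add_le _ _

lemma vnorm_le_vnorm_of_abs_le {k : ℕ} {v w : Fin k → ℝ} (h : ∀ i, |v i| ≤ |w i|) :
    vnorm v ≤ vnorm w :=
  Real.sqrt_le_sqrt <| Finset.sum_le_sum fun i _ => sq_le_sq.mpr (h i)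

lemma vnorm_relu_le {k : ℕ} (v : Fin k → ℝ) : vnorm (relu v) ≤ vnorm v :=
  vnorm_le_vnorm_of_abs_le fun i => by simpa [relu] using abs_max_sub_max_le_abs (v i) 0 0

lemma vnorm_relu_sub_relu_le {k : ℕ} (v w : Fin k → ℝ) :
    vnorm (relu v - relu w) ≤ vnorm (v - w) :=
  vnorm_le_vnorm_of_abs_le fun i => abs_max_sub_max_le_abs (v i) (w i) 0

lemma specNorm_nonneg {m k : ℕ} (A : Matrix (Fin m) (Fin k) ℝ) : 0 ≤ specNorm A :=
  norm_nonneg _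

lemma specNorm_add_le {m k : ℕ} (A B : Matrix (Fin m) (Fin k) ℝ) :
    specNorm (A + B) ≤ specNorm A + specNorm B := by
  simpa only [specNorm, map_add] using norm_add_le _ _

lemma vnorm_mulVec_le {m k : ℕ} (A : Matrix (Fin m) (Fin k) ℝ) (v : Fin k → ℝ) :
    vnorm (A *ᵥ v) ≤ specNorm A * vnorm v := by
  rw [vnorm_eq_norm_toLp, vnorm_eq_norm_toLp]
  exact (LinearMap.toContinuousLinearMap (toEuclideanLin A)).le_opNorm (WithLp.toLp 2 v)

lemma vnorm_add_mulVec_sub_mulVec_le {m k : ℕ} (A B : Matrix (Fin m) (Fin k) ℝ)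
    {z y : Fin k → ℝ} {P Q X : ℝ} (hzy : vnorm (z - y) ≤ (Q - P) * X) (hy : vnorm y ≤ P * X) :
    vnorm ((A + B) *ᵥ z - A *ᵥ y) ≤ (Q * (specNorm A + specNorm B) - P * specNorm A) * X := by
  have hsplit : (A + B) *ᵥ z - A *ᵥ y = (A + B) *ᵥ (z - y) + B *ᵥ y := by
    rw [mulVec_sub, add_mulVec, add_mulVec]
    abel
  calc vnorm ((A + B) *ᵥ z - A *ᵥ y)
      ≤ specNorm (A + B) * vnorm (z - y) + specNorm B * vnorm y := by
        rw [hsplit]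
        exact (vnorm_add_le _ _).trans (add_le_add (vnorm_mulVec_le _ _) (vnorm_mulVec_le _ _))
    _ ≤ (specNorm A + specNorm B) * ((Q - P) * X) + specNorm B * (P * X) := by
        refine add_le_add (mul_le_mul (specNorm_add_le A B) hzy (vnorm_nonneg _) ?_)
          (mul_le_mul_of_nonneg_left hy (specNorm_nonneg B))
        exact add_nonneg (specNorm_nonneg A) (specNorm_nonneg B)
    _ = (Q * (specNorm A + specNorm B) - P * specNorm A) * X := by ring

lemma vnorm_actStack_le : ∀ (n : ℕ) (d : Fin (n + 1) → ℕ)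
    (W : (l : Fin n) → Matrix (Fin (d l.succ)) (Fin (d l.castSucc)) ℝ) (x : Fin (d 0) → ℝ),
    vnorm (actStack n d W x) ≤ (∏ l, specNorm (W l)) * vnorm x
  | 0, _, _, x => by simp [actStack]
  | n + 1, d, W, x => by
    rw [actStack, Fin.prod_univ_castSucc, mul_comm (∏ l : Fin n, _), mul_assoc]
    exact (vnorm_relu_le _).trans <| (vnorm_mulVec_le _ _).trans <|
      mul_le_mul_of_nonneg_left
        (vnorm_actStack_le n (fun l => d l.castSucc) (fun l => W l.castSucc) x) (specNorm_nonneg _)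

lemma vnorm_actStack_add_sub_le : ∀ (n : ℕ) (d : Fin (n + 1) → ℕ)
    (W U : (l : Fin n) → Matrix (Fin (d l.succ)) (Fin (d l.castSucc)) ℝ) (x : Fin (d 0) → ℝ),
    vnorm (actStack n d (fun l => W l + U l) x - actStack n d W x) ≤
      (∏ l, (specNorm (W l) + specNorm (U l)) - ∏ l, specNorm (W l)) * vnorm x
  | 0, _, _, _, x => by simp [actStack, vnorm]
  | n + 1, d, W, U, x => by
    rw [actStack, actStack, Fin.prod_univ_castSucc, Fin.prod_univ_castSucc]
    exact (vnorm_relu_sub_relu_le _ _).trans <| vnorm_add_mulVec_sub_mulVec_le _ _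
      (vnorm_actStack_add_sub_le n (fun l => d l.castSucc) (fun l => W l.castSucc)
        (fun l => U l.castSucc) x)
      (vnorm_actStack_le n (fun l => d l.castSucc) (fun l => W l.castSucc) x)

lemma vnorm_reluNet_add_sub_le : ∀ (n : ℕ) (d : Fin (n + 1) → ℕ)
    (W U : (l : Fin n) → Matrix (Fin (d l.succ)) (Fin (d l.castSucc)) ℝ) (x : Fin (d 0) → ℝ),
    vnorm (reluNet n d (fun l => W l + U l) x - reluNet n d W x) ≤
      (∏ l, (specNorm (W l) + specNorm (U l)) - ∏ l, specNorm (W l)) * vnorm x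
  | 0, _, _, _, x => by simp [reluNet, vnorm]
  | n + 1, d, W, U, x => by
    rw [reluNet, reluNet, Fin.prod_univ_castSucc, Fin.prod_univ_castSucc]
    exact vnorm_add_mulVec_sub_mulVec_le _ _
      (vnorm_actStack_add_sub_le n (fun l => d l.castSucc) (fun l => W l.castSucc)
        (fun l => U l.castSucc) x)
      (vnorm_actStack_le n (fun l => d l.castSucc) (fun l => W l.castSucc) x)

lemma Real.prod_one_add_sub_one_le_exp_sum_mul_sum {ι : Type*} (s : Finset ι) {r : ι → ℝ}
    (hr : ∀ i, 0 ≤ r i) :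
    ∏ i ∈ s, (1 + r i) - 1 ≤ Real.exp (∑ i ∈ s, r i) * ∑ i ∈ s, r i := by
  set S := ∑ i ∈ s, r i
  have hexp : (1 - S) * Real.exp S ≤ 1 :=
    calc (1 - S) * Real.exp S ≤ Real.exp (-S) * Real.exp S :=
          mul_le_mul_of_nonneg_right (Real.one_sub_le_exp_neg S) (Real.exp_pos S).le
      _ = 1 := by rw [← Real.exp_add, neg_add_cancel, Real.exp_zero]
  linarith [Real.prod_one_add_le_exp_sum s hr]

lemma Real.prod_add_sub_prod_le {ι : Type*} (s : Finset ι) {w u : ι → ℝ} (hw : ∀ i, 0 ≤ w i)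
    (hu : ∀ i, 0 ≤ u i) (huw : ∀ i, w i = 0 → u i = 0) :
    ∏ i ∈ s, (w i + u i) - ∏ i ∈ s, w i ≤
      Real.exp (∑ i ∈ s, u i / w i) * (∏ i ∈ s, w i) * ∑ i ∈ s, u i / w i := by
  have hfactor : ∀ i, w i + u i = w i * (1 + u i / w i) := fun i => by
    rcases eq_or_ne (w i) 0 with h | h
    · simp [h, huw i h]
    · field_simp
  simp only [hfactor, Finset.prod_mul_distrib]
  rw [mul_right_comm, ← mul_sub_one, mul_comm]
  exact mul_le_mul_of_nonneg_right
    (Real.prod_one_add_sub_one_le_exp_sum_mul_sum s fun i => div_nonneg (hu i) (hw i))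
    (Finset.prod_nonneg fun i _ => hw i)

theorem vnorm_reluNet_perturb_le_general {n : ℕ} (d : Fin (n + 1) → ℕ)
    (W U : (l : Fin n) → Matrix (Fin (d l.succ)) (Fin (d l.castSucc)) ℝ)
    (hU : ∀ l, specNorm (U l) ≤ (1 / (n : ℝ)) * specNorm (W l))
    (x : Fin (d 0) → ℝ) :
    vnorm (reluNet n d (fun l => W l + U l) x - reluNet n d W x) ≤
      Real.exp 1 * vnorm x * (∏ l, specNorm (W l)) *
        ∑ l, specNorm (U l) / specNorm (W l) := by
  set S := ∑ l, specNorm (U l) / specNorm (W l)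
  have hS : S ≤ 1 :=
    calc S ≤ ∑ _l : Fin n, 1 / (n : ℝ) := Finset.sum_le_sum fun l _ =>
          div_le_of_le_mul₀ (specNorm_nonneg _) (by positivity) (hU l)
      _ ≤ 1 := by simpa using mul_inv_le_one (a := (n : ℝ))
  have hvanish : ∀ l, specNorm (W l) = 0 → specNorm (U l) = 0 := fun l h =>
    le_antisymm (by simpa [h] using hU l) (specNorm_nonneg _)
  calc _ ≤ (∏ l, (specNorm (W l) + specNorm (U l)) - ∏ l, specNorm (W l)) * vnorm x :=
        vnorm_reluNet_add_sub_le n d W U x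
    _ ≤ Real.exp S * (∏ l, specNorm (W l)) * S * vnorm x :=
        mul_le_mul_of_nonneg_right (Real.prod_add_sub_prod_le _ (fun l => specNorm_nonneg _)
          (fun l => specNorm_nonneg _) hvanish) (vnorm_nonneg x)
    _ ≤ Real.exp 1 * (∏ l, specNorm (W l)) * S * vnorm x := by
        have hX := vnorm_nonneg x
        have hP := Finset.prod_nonneg fun l (_ : l ∈ Finset.univ) => specNorm_nonneg (W l)
        have hS₀ : 0 ≤ S :=
          Finset.sum_nonneg fun l _ => div_nonneg (specNorm_nonneg _) (specNorm_nonneg _)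
        gcongr
    _ = _ := by ring

/-- weight-perturbation bound, Neyshabur et al.: if every
`W_l ≠ 0` and `‖U_l‖₂ ≤ (1/n)‖W_l‖₂`, then for every input `x`,
`‖f_{W+U}(x) - f_W(x)‖₂ ≤ e · ‖x‖₂ · (∏_l ‖W_l‖₂) · ∑_l ‖U_l‖₂/‖W_l‖₂`. -/
theorem vnorm_reluNet_perturb_le {n : ℕ} (hn : 1 ≤ n) (d : Fin (n + 1) → ℕ)
    (W U : (l : Fin n) → Matrix (Fin (d l.succ)) (Fin (d l.castSucc)) ℝ)
    (hW : ∀ l, W l ≠ 0)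
    (hU : ∀ l, specNorm (U l) ≤ (1 / (n : ℝ)) * specNorm (W l))
    (x : Fin (d 0) → ℝ) :
    vnorm (reluNet n d (fun l => W l + U l) x - reluNet n d W x) ≤
      Real.exp 1 * vnorm x * (∏ l, specNorm (W l)) *
        ∑ l, specNorm (U l) / specNorm (W l) :=
  vnorm_reluNet_perturb_le_general d W U hU x
end
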